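/- arXiv:2604.08733 — 2 statements merged into one kernel-verified Lean document; each statement's English description precedes it below -/
import Mathlib

section
/- (Proposition 2.1, monotonicity inequality) For every p > 1 there exists a constant C̃_p > 0 such that for all η, η' ∈ ℝ^N with |η| + |η'| > 0 one has (a_p(η) − a_p(η')) · (η − η') ≥ C̃_p (|η| + |η'|)^{p−2} |η − η'|². -/
open scoped RealInnerProductSpace Classical

/-- The anisotropic vector field `a_p(η) = H(η)^(p-1) ∇H(η)` (and `a_p 0 = 0`). -/
noncomputable def aVec {N : ℕ} (H : EuclideanSpace ℝ (Fin N) → ℝ) (p : ℝ) :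
    EuclideanSpace ℝ (Fin N) → EuclideanSpace ℝ (Fin N) :=
  fun η => if η = 0 then 0 else (H η) ^ (p - 1) • gradient H η

/-!
Along a segment from `x` to `y` missing the origin, the derivative of
`t ↦ a_p(x + t (y - x)) · (y - x)` is the quadratic form `D a_p(z) (y - x) · (y - x)` at a point
`z` of the segment. Splitting a direction into a multiple of `z` and a part tangent to the level
set of `H` through `z` (Euler's identity), homogeneity of `H` and its ellipticity on `{H = 1}`
bound this form below by `c ‖z‖^(p-2) ‖y - x‖²`.

For `‖η'‖ ≤ ‖η‖`, every point `z` of the last quarter of the segment from `η'` to `η` has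
`(‖η‖ + ‖η'‖) / 4 ≤ ‖z‖ ≤ ‖η‖ + ‖η'‖`, so the mean value theorem there gives the inequality, while
on the first three quarters it is enough that `a_p` is monotone. Monotonicity along a segment
through the origin, where the mean value theorem is unavailable, follows from `a_p` being odd and
positively homogeneous of degree `p - 1`.
-/

open Set Topology

theorem min_rpow_mul_le_rpow {a b s r : ℝ} (q : ℝ) (ha : 0 < a) (hs : 0 < s)
    (har : a * s ≤ r) (hrb : r ≤ b * s) : min (a ^ q) (b ^ q) * s ^ q ≤ r ^ q := by
  have hb : 0 < b := pos_of_mul_pos_left ((mul_pos ha hs).trans_le (har.trans hrb)) hs.le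
  rw [min_mul_of_nonneg _ _ (by positivity), ← Real.mul_rpow ha.le hs.le,
    ← Real.mul_rpow hb.le hs.le]
  rcases le_total 0 q with hq | hq
  · exact min_le_of_left_le (Real.rpow_le_rpow (by positivity) har hq)
  · exact min_le_of_right_le (Real.rpow_le_rpow_of_nonpos ((mul_pos ha hs).trans_le har) hrb hq)

section PosHomogeneous

variable {E F : Type*} [NormedAddCommGroup E] [NormedSpace ℝ E]
  [NormedAddCommGroup F] [NormedSpace ℝ F]

theorem fderiv_smul_of_comp_smul {f : E → F} {t c : ℝ} (ht : t ≠ 0)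
    (hf : ∀ x, f (t • x) = c • f x) (x : E) :
    fderiv ℝ f (t • x) = (t⁻¹ * c) • fderiv ℝ f x := by
  have h := fderiv_comp_smul (f := f) (x := x) t
  rw [show (f <| t • ·) = c • f from funext hf, fderiv_const_smul_field, Pi.smul_apply] at h
  rw [mul_smul, h, inv_smul_smul₀ ht]

theorem hasDerivAt_comp_smul_self {f : E → F} {x : E} (hf : DifferentiableAt ℝ f x) :
    HasDerivAt (fun s : ℝ => f (s • x)) (fderiv ℝ f x x) 1 := by
  have hline : HasDerivAt (fun s : ℝ => s • x) x 1 := by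
    simpa using (hasDerivAt_id (1 : ℝ)).smul_const x
  have hf' : HasFDerivAt f (fderiv ℝ f x) ((1 : ℝ) • x) := by
    rw [one_smul]; exact hf.hasFDerivAt
  exact hf'.comp_hasDerivAt 1 hline

variable {H : E → ℝ}

theorem fderiv_smul_of_posHomogeneous (hhom : ∀ t : ℝ, 0 < t → ∀ x, H (t • x) = t * H x)
    {t : ℝ} (ht : 0 < t) (x : E) : fderiv ℝ H (t • x) = fderiv ℝ H x := by
  rw [fderiv_smul_of_comp_smul ht.ne' (hhom t ht), inv_mul_cancel₀ ht.ne', one_smul]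

theorem fderiv_fderiv_smul_of_posHomogeneous
    (hhom : ∀ t : ℝ, 0 < t → ∀ x, H (t • x) = t * H x) {t : ℝ} (ht : 0 < t) (x : E) :
    fderiv ℝ (fderiv ℝ H) (t • x) = t⁻¹ • fderiv ℝ (fderiv ℝ H) x := by
  rw [fderiv_smul_of_comp_smul ht.ne' (fun y => by
    rw [fderiv_smul_of_posHomogeneous hhom ht, one_smul]), mul_one]

theorem fderiv_neg_of_even (heven : ∀ x, H (-x) = H x) (x : E) :
    fderiv ℝ H (-x) = -fderiv ℝ H x := by
  have := fderiv_smul_of_comp_smul (f := H) (t := -1) (c := 1) (by norm_num)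
    (fun y => by rw [neg_one_smul, heven, one_smul]) x
  simpa using this

theorem fderiv_apply_self_of_posHomogeneous
    (hhom : ∀ t : ℝ, 0 < t → ∀ x, H (t • x) = t * H x) {x : E} (hH : DifferentiableAt ℝ H x) :
    fderiv ℝ H x x = H x := by
  have hscale : (fun s : ℝ => s * H x) =ᶠ[𝓝 1] fun s => H (s • x) := by
    filter_upwards [lt_mem_nhds one_pos] with s hs using (hhom s hs x).symm
  exact ((hasDerivAt_comp_smul_self hH).congr_of_eventuallyEq hscale).unique
    (by simpa using (hasDerivAt_id (1 : ℝ)).mul_const (H x))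

theorem fderiv_fderiv_apply_self_of_posHomogeneous
    (hhom : ∀ t : ℝ, 0 < t → ∀ x, H (t • x) = t * H x) {x : E}
    (hH : DifferentiableAt ℝ (fderiv ℝ H) x) : fderiv ℝ (fderiv ℝ H) x x = 0 := by
  have hconst : (fun _ : ℝ => fderiv ℝ H x) =ᶠ[𝓝 1] fun s => fderiv ℝ H (s • x) := by
    filter_upwards [lt_mem_nhds one_pos] with s hs
      using (fderiv_smul_of_posHomogeneous hhom hs x).symm
  exact ((hasDerivAt_comp_smul_self hH).congr_of_eventuallyEq hconst).unique (hasDerivAt_const _ _)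

theorem fderiv_fderiv_add_smul_self (hhom : ∀ t : ℝ, 0 < t → ∀ x, H (t • x) = t * H x)
    {x : E} (hH : ContDiffAt ℝ 2 H x) (v : E) (a : ℝ) :
    fderiv ℝ (fderiv ℝ H) x (v + a • x) (v + a • x) = fderiv ℝ (fderiv ℝ H) x v v := by
  have hx : fderiv ℝ (fderiv ℝ H) x x = 0 :=
    fderiv_fderiv_apply_self_of_posHomogeneous hhom
      ((hH.fderiv_right (m := 1) le_rfl).differentiableAt one_ne_zero)
  have hsymm : fderiv ℝ (fderiv ℝ H) x v x = fderiv ℝ (fderiv ℝ H) x x v :=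
    hH.isSymmSndFDerivAt (by simp) v x
  simp [hx, hsymm]

theorem eq_norm_mul_of_posHomogeneous (hhom : ∀ t : ℝ, 0 < t → ∀ x, H (t • x) = t * H x)
    {x : E} (hx : x ≠ 0) : H x = ‖x‖ * H (‖x‖⁻¹ • x) := by
  rw [← hhom _ (norm_pos_iff.mpr hx), smul_inv_smul₀ (norm_ne_zero_iff.mpr hx)]

theorem exists_mul_norm_le_and_le_mul_norm [ProperSpace E]
    (hcont : ContinuousOn H {0}ᶜ) (hpos : ∀ x ≠ 0, 0 < H x)
    (hhom : ∀ t : ℝ, 0 < t → ∀ x, H (t • x) = t * H x) :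
    ∃ m M : ℝ, 0 < m ∧ 0 < M ∧ ∀ x, m * ‖x‖ ≤ H x ∧ H x ≤ M * ‖x‖ := by
  have hsphere : Metric.sphere (0 : E) 1 ⊆ {0}ᶜ := fun x hx h => by simp_all
  have hcont' := hcont.mono hsphere
  obtain ⟨m, hm, hmH⟩ := (isCompact_sphere (0 : E) 1).exists_forall_le' hcont'
    (a := 0) fun x hx => hpos x (hsphere hx)
  obtain ⟨M, hMH⟩ := (isCompact_sphere (0 : E) 1).exists_bound_of_continuousOn hcont'
  refine ⟨m, max M 1, hm, by positivity, fun x => ?_⟩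
  rcases eq_or_ne x 0 with rfl | hx
  · have h0 : H 0 = 2 * H 0 := by simpa using hhom 2 two_pos 0
    simp only [norm_zero, mul_zero]
    constructor <;> linarith
  have hu : ‖x‖⁻¹ • x ∈ Metric.sphere (0 : E) 1 := by
    simp [norm_smul, norm_ne_zero_iff.mpr hx]
  rw [eq_norm_mul_of_posHomogeneous hhom hx, mul_comm m, mul_comm (max M 1)]
  refine ⟨by gcongr; exact hmH _ hu, ?_⟩
  gcongr
  exact (le_abs_self _).trans ((hMH _ hu).trans (le_max_left _ _))

/-- `aVecQuad H p x ζ = D a_p(x) ζ · ζ` for `x ≠ 0`. -/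
noncomputable def aVecQuad (H : E → ℝ) (p : ℝ) (x v : E) : ℝ :=
  (p - 1) * H x ^ (p - 2) * (fderiv ℝ H x v) ^ 2 + H x ^ (p - 1) * fderiv ℝ (fderiv ℝ H) x v v

theorem mul_norm_sq_le_of_eq_one (hhom : ∀ t : ℝ, 0 < t → ∀ x, H (t • x) = t * H x)
    {x : E} (hH : ContDiffAt ℝ 2 H x) (hx : H x = 1) {m lam p : ℝ} (hm : 0 < m)
    (hmx : m * ‖x‖ ≤ 1) (hlam : 0 ≤ lam) (hp : 1 ≤ p)
    (hell : ∀ ζ, fderiv ℝ H x ζ = 0 → lam * ‖ζ‖ ^ 2 ≤ fderiv ℝ (fderiv ℝ H) x ζ ζ) (ζ : E) :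
    min lam ((p - 1) * m ^ 2) / 2 * ‖ζ‖ ^ 2 ≤
      (p - 1) * (fderiv ℝ H x ζ) ^ 2 + fderiv ℝ (fderiv ℝ H) x ζ ζ := by
  -- `w` is tangent to the level set by Euler's identity, and `D²H(x)` annihilates `x`.
  set α := fderiv ℝ H x ζ
  set w := ζ - α • x
  have hζ : ζ = w + α • x := by simp [w]
  have hw : fderiv ℝ H x w = 0 := by
    simp [w, fderiv_apply_self_of_posHomogeneous hhom (hH.differentiableAt two_ne_zero), hx, α]
  have hD2 : fderiv ℝ (fderiv ℝ H) x ζ ζ = fderiv ℝ (fderiv ℝ H) x w w := by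
    rw [hζ, fderiv_fderiv_add_smul_self hhom hH]
  have hnorm : m * ‖ζ‖ ≤ m * ‖w‖ + |α| := calc
    m * ‖ζ‖ ≤ m * (‖w‖ + |α| * ‖x‖) := by
      gcongr; rw [hζ]; exact (norm_add_le _ _).trans_eq (by rw [norm_smul, Real.norm_eq_abs])
    _ = m * ‖w‖ + |α| * (m * ‖x‖) := by ring
    _ ≤ m * ‖w‖ + |α| := by gcongr; exact mul_le_of_le_one_right (abs_nonneg α) hmx
  set c := min lam ((p - 1) * m ^ 2) / 2
  have hc₁ : 2 * c ≤ lam := by simp only [c]; linarith [min_le_left lam ((p - 1) * m ^ 2)]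
  have hc₂ : 2 * c ≤ (p - 1) * m ^ 2 := by
    simp only [c]; linarith [min_le_right lam ((p - 1) * m ^ 2)]
  have hc : 0 ≤ c := by simp only [c]; positivity
  have hsq : (m * ‖ζ‖) ^ 2 ≤ 2 * (m * ‖w‖) ^ 2 + 2 * α ^ 2 := by
    nlinarith [sq_nonneg (m * ‖w‖ - |α|), sq_abs α, mul_nonneg hm.le (norm_nonneg ζ)]
  have key : m ^ 2 * (c * ‖ζ‖ ^ 2) ≤ m ^ 2 * (lam * ‖w‖ ^ 2 + (p - 1) * α ^ 2) := by
    nlinarith [mul_le_mul_of_nonneg_right hc₁ (mul_nonneg (sq_nonneg m) (sq_nonneg ‖w‖)),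
      mul_le_mul_of_nonneg_right hc₂ (sq_nonneg α), mul_le_mul_of_nonneg_left hsq hc]
  have := le_of_mul_le_mul_left key (by positivity)
  linarith [hell w hw]

theorem exists_pos_mul_rpow_le_aVecQuad [ProperSpace E] (hC2 : ContDiffOn ℝ 2 H {0}ᶜ)
    (hpos : ∀ x ≠ 0, 0 < H x) (hhom : ∀ t : ℝ, 0 < t → ∀ x, H (t • x) = t * H x)
    {lam : ℝ} (hlam : 0 < lam)
    (hell : ∀ ξ, H ξ = 1 → ∀ ζ, fderiv ℝ H ξ ζ = 0 → lam * ‖ζ‖ ^ 2 ≤ fderiv ℝ (fderiv ℝ H) ξ ζ ζ)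
    {p : ℝ} (hp : 1 < p) :
    ∃ c, 0 < c ∧ ∀ x ≠ 0, ∀ ζ, c * ‖x‖ ^ (p - 2) * ‖ζ‖ ^ 2 ≤ aVecQuad H p x ζ := by
  obtain ⟨m, M, hm, hM, hmM⟩ := exists_mul_norm_le_and_le_mul_norm hC2.continuousOn hpos hhom
  set c := min lam ((p - 1) * m ^ 2) / 2
  have hc : 0 < c := by
    have : 0 < p - 1 := by linarith
    positivity
  refine ⟨c * min (m ^ (p - 2)) (M ^ (p - 2)), by positivity, fun x hx ζ => ?_⟩
  -- Rescale to `y = x / H x` on the unit level set: `DH y = DH x` and `D²H y = H x • D²H x`.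
  set s := H x
  have hs : 0 < s := hpos x hx
  set y := s⁻¹ • x
  have hy : y ≠ 0 := smul_ne_zero (inv_ne_zero hs.ne') hx
  have hy1 : H y = 1 := by simp only [y, hhom _ (inv_pos.mpr hs), inv_mul_cancel₀ hs.ne', s]
  have hlevel := mul_norm_sq_le_of_eq_one hhom
    (hC2.contDiffAt (isOpen_compl_singleton.mem_nhds hy)) hy1 hm (hy1 ▸ (hmM y).1) hlam.le hp.le
    (hell y hy1) ζ
  rw [fderiv_smul_of_posHomogeneous hhom (inv_pos.mpr hs),
    fderiv_fderiv_smul_of_posHomogeneous hhom (inv_pos.mpr hs), inv_inv] at hlevel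
  simp only [smul_apply, smul_eq_mul] at hlevel
  have hrpow : min (m ^ (p - 2)) (M ^ (p - 2)) * ‖x‖ ^ (p - 2) ≤ s ^ (p - 2) :=
    min_rpow_mul_le_rpow _ hm (norm_pos_iff.mpr hx) (hmM x).1 (hmM x).2
  calc c * min (m ^ (p - 2)) (M ^ (p - 2)) * ‖x‖ ^ (p - 2) * ‖ζ‖ ^ 2
      = c * ‖ζ‖ ^ 2 * (min (m ^ (p - 2)) (M ^ (p - 2)) * ‖x‖ ^ (p - 2)) := by ring
    _ ≤ ((p - 1) * (fderiv ℝ H x ζ) ^ 2 + s * fderiv ℝ (fderiv ℝ H) x ζ ζ) * s ^ (p - 2) :=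
      mul_le_mul hlevel hrpow (by positivity) (le_trans (by positivity) hlevel)
    _ = aVecQuad H p x ζ := by
      rw [aVecQuad, show p - 1 = p - 2 + 1 by ring, Real.rpow_add_one hs.ne']
      ring

theorem hasDerivAt_rpow_mul_fderiv_line {x v : E} {t p : ℝ} (hH : ContDiffAt ℝ 2 H (x + t • v))
    (hpos : 0 < H (x + t • v)) :
    HasDerivAt (fun s : ℝ => H (x + s • v) ^ (p - 1) * fderiv ℝ H (x + s • v) v)
      (aVecQuad H p (x + t • v) v) t := by
  have hline : HasDerivAt (fun s : ℝ => x + s • v) v t := by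
    simpa using ((hasDerivAt_id t).smul_const v).const_add x
  have hH' : HasDerivAt (fun s => H (x + s • v)) (fderiv ℝ H (x + t • v) v) t :=
    (hH.differentiableAt two_ne_zero).hasFDerivAt.comp_hasDerivAt t hline
  have hDH : HasDerivAt (fun s => fderiv ℝ H (x + s • v) v)
      (fderiv ℝ (fderiv ℝ H) (x + t • v) v v) t := by
    have := ((hH.fderiv_right (m := 1) le_rfl).differentiableAt one_ne_zero).hasFDerivAt
      |>.comp_hasDerivAt t hline
    simpa using this.clm_apply (hasDerivAt_const t v)
  refine ((hH'.rpow_const (p := p - 1) (Or.inl hpos.ne')).mul hDH).congr_deriv ?_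
  rw [aVecQuad, show p - 1 - 1 = p - 2 by ring]
  ring

theorem le_norm_and_norm_le_of_mem_segment {η η' z : E} (hle : ‖η'‖ ≤ ‖η‖)
    (hz : z ∈ segment ℝ ((1 / 4 : ℝ) • η' + (3 / 4 : ℝ) • η) η) :
    1 / 4 * (‖η‖ + ‖η'‖) ≤ ‖z‖ ∧ ‖z‖ ≤ 1 * (‖η‖ + ‖η'‖) := by
  obtain ⟨a, b, ha, hb, hab, rfl⟩ := hz
  obtain rfl : b = 1 - a := by linarith
  have hz : a • ((1 / 4 : ℝ) • η' + (3 / 4 : ℝ) • η) + (1 - a) • η =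
      (1 - a / 4) • η + (a / 4) • η' := by module
  have h₁ : ‖(1 - a / 4) • η‖ = (1 - a / 4) * ‖η‖ := by
    rw [norm_smul, Real.norm_of_nonneg (by linarith)]
  have h₂ : ‖(a / 4) • η'‖ = a / 4 * ‖η'‖ := by rw [norm_smul, Real.norm_of_nonneg (by linarith)]
  rw [hz]
  constructor
  · have := norm_sub_norm_le ((1 - a / 4) • η) (-((a / 4) • η'))
    rw [sub_neg_eq_add, norm_neg, h₁, h₂] at this
    nlinarith [mul_nonneg ha (sub_nonneg.mpr hle), mul_nonneg hb (norm_nonneg η)]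
  · have := norm_add_le ((1 - a / 4) • η) ((a / 4) • η')
    rw [h₁, h₂] at this
    nlinarith [norm_nonneg η']

end PosHomogeneous

section aVec

variable {N : ℕ} {H : EuclideanSpace ℝ (Fin N) → ℝ} {p : ℝ}

local notation "𝔼" => EuclideanSpace ℝ (Fin N)

theorem inner_aVec {x : 𝔼} (hx : x ≠ 0) (v : 𝔼) :
    ⟪aVec H p x, v⟫ = H x ^ (p - 1) * fderiv ℝ H x v := by
  rw [aVec, if_neg hx, real_inner_smul_left, gradient, InnerProductSpace.toDual_symm_apply]

theorem aVec_smul (hpos : ∀ x ≠ 0, 0 < H x) (hhom : ∀ t : ℝ, 0 < t → ∀ x, H (t • x) = t * H x)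
    (hp : 1 < p) {t : ℝ} (ht : 0 ≤ t) (x : 𝔼) : aVec H p (t • x) = t ^ (p - 1) • aVec H p x := by
  rcases ht.eq_or_lt with rfl | ht
  · simp [aVec, Real.zero_rpow (by linarith : p - 1 ≠ 0)]
  rcases eq_or_ne x 0 with rfl | hx
  · simp [aVec]
  rw [aVec, aVec, if_neg (smul_ne_zero ht.ne' hx), if_neg hx, hhom t ht,
    Real.mul_rpow ht.le (hpos x hx).le, gradient, gradient,
    fderiv_smul_of_posHomogeneous hhom ht, smul_smul]

theorem aVec_neg (heven : ∀ x, H (-x) = H x) (x : 𝔼) : aVec H p (-x) = -aVec H p x := by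
  rcases eq_or_ne x 0 with rfl | hx
  · simp [aVec]
  rw [aVec, aVec, if_neg (neg_ne_zero.mpr hx), if_neg hx, heven, gradient, gradient,
    fderiv_neg_of_even heven, map_neg, smul_neg]

theorem inner_aVec_self_nonneg (hC2 : ContDiffOn ℝ 2 H {0}ᶜ) (hpos : ∀ x ≠ 0, 0 < H x)
    (hhom : ∀ t : ℝ, 0 < t → ∀ x, H (t • x) = t * H x) (x : 𝔼) : 0 ≤ ⟪aVec H p x, x⟫ := by
  rcases eq_or_ne x 0 with rfl | hx
  · simp
  rw [inner_aVec hx, fderiv_apply_self_of_posHomogeneous hhom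
    ((hC2.contDiffAt (isOpen_compl_singleton.mem_nhds hx)).differentiableAt two_ne_zero)]
  exact mul_nonneg (Real.rpow_nonneg (hpos x hx).le _) (hpos x hx).le

theorem exists_mem_segment_inner_aVec_sub_eq (hC2 : ContDiffOn ℝ 2 H {0}ᶜ)
    (hpos : ∀ x ≠ 0, 0 < H x) {x y : 𝔼} (h0 : (0 : 𝔼) ∉ segment ℝ x y) :
    ∃ z ∈ segment ℝ x y, ⟪aVec H p y - aVec H p x, y - x⟫ = aVecQuad H p z (y - x) := by
  have hne : ∀ t ∈ Icc (0 : ℝ) 1, x + t • (y - x) ≠ 0 := fun t ht h =>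
    h0 (segment_eq_image' ℝ x y ▸ ⟨t, ht, h⟩)
  have hderiv : ∀ t ∈ Icc (0 : ℝ) 1, HasDerivAt
      (fun s : ℝ => H (x + s • (y - x)) ^ (p - 1) * fderiv ℝ H (x + s • (y - x)) (y - x))
      (aVecQuad H p (x + t • (y - x)) (y - x)) t := fun t ht =>
    hasDerivAt_rpow_mul_fderiv_line (hC2.contDiffAt (isOpen_compl_singleton.mem_nhds (hne t ht)))
      (hpos _ (hne t ht))
  obtain ⟨t, ht, hslope⟩ := exists_hasDerivAt_eq_slope _ _ zero_lt_one
    (fun t ht => (hderiv t ht).continuousAt.continuousWithinAt)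
    (fun t ht => hderiv t (Ioo_subset_Icc_self ht))
  refine ⟨x + t • (y - x), segment_eq_image' ℝ x y ▸ ⟨t, Ioo_subset_Icc_self ht, rfl⟩, ?_⟩
  have hx := hne 0 (by simp)
  have hy := hne 1 (by simp)
  simp only [zero_smul, add_zero, one_smul, add_sub_cancel] at hx hy
  rw [hslope, inner_sub_left, inner_aVec hy, inner_aVec hx]
  simp

theorem inner_aVec_sub_nonneg (hC2 : ContDiffOn ℝ 2 H {0}ᶜ) (hpos : ∀ x ≠ 0, 0 < H x)
    (hhom : ∀ t : ℝ, 0 < t → ∀ x, H (t • x) = t * H x) (heven : ∀ x, H (-x) = H x) (hp : 1 < p)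
    (hQ : ∀ z ≠ 0, ∀ ζ, 0 ≤ aVecQuad H p z ζ) (x y : 𝔼) :
    0 ≤ ⟪aVec H p y - aVec H p x, y - x⟫ := by
  by_cases h0 : (0 : 𝔼) ∈ segment ℝ x y
  · obtain ⟨a, b, ha, hb, hab, hxy⟩ := h0
    rcases hb.eq_or_lt with rfl | hb
    · obtain rfl : x = 0 := by simpa [show a = 1 by linarith] using hxy
      simpa [aVec] using inner_aVec_self_nonneg (p := p) hC2 hpos hhom y
    obtain rfl : y = -((b⁻¹ * a) • x) := by
      rw [mul_smul, ← smul_neg, eq_inv_smul_iff₀ hb.ne']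
      exact eq_neg_of_add_eq_zero_right hxy
    set s := b⁻¹ * a
    rw [aVec_neg heven, aVec_smul hpos hhom hp (by positivity)]
    have hcollinear : ⟪-(s ^ (p - 1) • aVec H p x) - aVec H p x, -(s • x) - x⟫ =
        (s ^ (p - 1) + 1) * (s + 1) * ⟪aVec H p x, x⟫ := by
      rw [show -(s ^ (p - 1) • aVec H p x) - aVec H p x = (-(s ^ (p - 1) + 1)) • aVec H p x by
          module, show -(s • x) - x = (-(s + 1)) • x by module, real_inner_smul_left,
        real_inner_smul_right]
      ring
    rw [hcollinear]
    exact mul_nonneg (by positivity) (inner_aVec_self_nonneg hC2 hpos hhom x)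
  · obtain ⟨z, hz, heq⟩ := exists_mem_segment_inner_aVec_sub_eq (p := p) hC2 hpos h0
    rw [heq]
    exact hQ z (fun h => h0 (h ▸ hz)) _

theorem le_inner_aVec_sub_of_norm_le (hC2 : ContDiffOn ℝ 2 H {0}ᶜ) (hpos : ∀ x ≠ 0, 0 < H x)
    (hhom : ∀ t : ℝ, 0 < t → ∀ x, H (t • x) = t * H x) (heven : ∀ x, H (-x) = H x) (hp : 1 < p)
    {c₀ : ℝ} (hc₀ : 0 ≤ c₀) (hQ : ∀ z ≠ 0, ∀ ζ, c₀ * ‖z‖ ^ (p - 2) * ‖ζ‖ ^ 2 ≤ aVecQuad H p z ζ)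
    {η η' : 𝔼} (hle : ‖η'‖ ≤ ‖η‖) (hS : 0 < ‖η‖ + ‖η'‖) :
    c₀ / 4 * min ((1 / 4) ^ (p - 2)) 1 * (‖η‖ + ‖η'‖) ^ (p - 2) * ‖η - η'‖ ^ 2 ≤
      ⟪aVec H p η - aVec H p η', η - η'⟫ := by
  set S := ‖η‖ + ‖η'‖
  set z₀ : 𝔼 := (1 / 4 : ℝ) • η' + (3 / 4 : ℝ) • η
  have h0 : (0 : 𝔼) ∉ segment ℝ z₀ η := fun h => by
    have := (le_norm_and_norm_le_of_mem_segment hle h).1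
    simp only [norm_zero] at this
    linarith
  obtain ⟨z, hz, heq⟩ := exists_mem_segment_inner_aVec_sub_eq (p := p) hC2 hpos h0
  have hrpow : min ((1 / 4) ^ (p - 2)) 1 * S ^ (p - 2) ≤ ‖z‖ ^ (p - 2) := by
    simpa using min_rpow_mul_le_rpow (p - 2) (by norm_num) hS
      (le_norm_and_norm_le_of_mem_segment hle hz).1 (le_norm_and_norm_le_of_mem_segment hle hz).2
  have hmono := inner_aVec_sub_nonneg hC2 hpos hhom heven hp
    (fun z hz ζ => le_trans (by positivity) (hQ z hz ζ)) η' z₀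
  have hη : η - z₀ = (1 / 4 : ℝ) • (η - η') := by module
  have hη' : z₀ - η' = (3 / 4 : ℝ) • (η - η') := by module
  calc c₀ / 4 * min ((1 / 4) ^ (p - 2)) 1 * S ^ (p - 2) * ‖η - η'‖ ^ 2
      = 4 * (c₀ * (min ((1 / 4) ^ (p - 2)) 1 * S ^ (p - 2)) * ‖η - z₀‖ ^ 2) := by
        rw [hη, norm_smul, Real.norm_of_nonneg (by norm_num)]
        ring
    _ ≤ 4 * (c₀ * ‖z‖ ^ (p - 2) * ‖η - z₀‖ ^ 2) := by gcongr
    _ ≤ 4 * ⟪aVec H p η - aVec H p z₀, η - z₀⟫ := by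
        rw [heq]
        gcongr
        exact hQ z (fun h => h0 (h ▸ hz)) _
    _ ≤ 4 * ⟪aVec H p η - aVec H p z₀, η - z₀⟫ + 4 / 3 * ⟪aVec H p z₀ - aVec H p η', z₀ - η'⟫ := by
        linarith
    _ = ⟪aVec H p η - aVec H p η', η - η'⟫ := by
        rw [hη, hη']
        simp only [real_inner_smul_right, inner_sub_left]
        ring

end aVec

theorem statement_5_general {N : ℕ}
    (H : EuclideanSpace ℝ (Fin N) → ℝ)
    (hH0 : H 0 = 0)
    (hHC2 : ContDiffOn ℝ 2 H {(0 : EuclideanSpace ℝ (Fin N))}ᶜ)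
    (hHeven : ∀ ξ : EuclideanSpace ℝ (Fin N), H (-ξ) = H ξ)
    (hHpos : ∀ ξ : EuclideanSpace ℝ (Fin N), ξ ≠ 0 → 0 < H ξ)
    (hHhom : ∀ ξ : EuclideanSpace ℝ (Fin N), ξ ≠ 0 → ∀ t : ℝ, 0 < t → H (t • ξ) = t * H ξ)
    (hHell : ∃ lam : ℝ, 0 < lam ∧ ∀ ξ : EuclideanSpace ℝ (Fin N), H ξ = 1 →
      ∀ ζ : EuclideanSpace ℝ (Fin N), ⟪gradient H ξ, ζ⟫ = 0 →
        lam * ‖ζ‖ ^ 2 ≤ iteratedFDeriv ℝ 2 H ξ ![ζ, ζ])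
    (p : ℝ) (hp : 1 < p) :
    ∃ C : ℝ, 0 < C ∧ ∀ η η' : EuclideanSpace ℝ (Fin N), 0 < ‖η‖ + ‖η'‖ →
      C * (‖η‖ + ‖η'‖) ^ (p - 2) * ‖η - η'‖ ^ 2 ≤
        ⟪aVec H p η - aVec H p η', η - η'⟫ := by
  obtain ⟨lam, hlam, hell⟩ := hHell
  have hhom : ∀ t : ℝ, 0 < t → ∀ x, H (t • x) = t * H x := fun t ht x => by
    rcases eq_or_ne x 0 with rfl | hx
    · simp [hH0]
    · exact hHhom x hx t ht
  obtain ⟨c₀, hc₀, hQ⟩ := exists_pos_mul_rpow_le_aVecQuad hHC2 hHpos hhom hlam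
    (fun ξ hξ ζ hζ => by
      simpa [iteratedFDeriv_two_apply] using
        hell ξ hξ ζ (by rwa [gradient, InnerProductSpace.toDual_symm_apply])) hp
  refine ⟨c₀ / 4 * min ((1 / 4) ^ (p - 2)) 1, by positivity, fun η η' hS => ?_⟩
  rcases le_total ‖η'‖ ‖η‖ with hle | hle
  · exact le_inner_aVec_sub_of_norm_le hHC2 hHpos hhom hHeven hp hc₀.le hQ hle hS
  · have := le_inner_aVec_sub_of_norm_le hHC2 hHpos hhom hHeven hp hc₀.le hQ hle (by linarith)
    rwa [add_comm, norm_sub_rev, ← neg_sub (aVec H p η), ← neg_sub η, inner_neg_neg] at this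

theorem statement_5 {N : ℕ} (hN : 2 ≤ N)
    (H : EuclideanSpace ℝ (Fin N) → ℝ)
    (hH0 : H 0 = 0)
    (hHnonneg : ∀ ξ : EuclideanSpace ℝ (Fin N), 0 ≤ H ξ)
    (hHC2 : ContDiffOn ℝ 2 H {(0 : EuclideanSpace ℝ (Fin N))}ᶜ)
    (hHeven : ∀ ξ : EuclideanSpace ℝ (Fin N), H (-ξ) = H ξ)
    (hHpos : ∀ ξ : EuclideanSpace ℝ (Fin N), ξ ≠ 0 → 0 < H ξ)
    (hHhom : ∀ ξ : EuclideanSpace ℝ (Fin N), ξ ≠ 0 → ∀ t : ℝ, 0 < t → H (t • ξ) = t * H ξ)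
    (hHell : ∃ lam : ℝ, 0 < lam ∧ ∀ ξ : EuclideanSpace ℝ (Fin N), H ξ = 1 →
      ∀ ζ : EuclideanSpace ℝ (Fin N), ⟪gradient H ξ, ζ⟫ = 0 →
        lam * ‖ζ‖ ^ 2 ≤ iteratedFDeriv ℝ 2 H ξ ![ζ, ζ])
    (p : ℝ) (hp : 1 < p) :
    ∃ C : ℝ, 0 < C ∧ ∀ η η' : EuclideanSpace ℝ (Fin N), 0 < ‖η‖ + ‖η'‖ →
      C * (‖η‖ + ‖η'‖) ^ (p - 2) * ‖η - η'‖ ^ 2 ≤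
        ⟪aVec H p η - aVec H p η', η - η'⟫ :=
  statement_5_general H hH0 hHC2 hHeven hHpos hHhom hHell p hp
end

section
/- (Proposition 2.1, Lipschitz-type inequality) For every p > 1 there exists a constant C̃_p > 0 such that for all η, η' ∈ ℝ^N with |η| + |η'| > 0 one has |a_p(η) − a_p(η')| ≤ C̃_p (|η| + |η'|)^{p−2} |η − η'|. -/
open scoped RealInnerProductSpace Classical

/-! `a_p` is positively homogeneous of degree `p - 1` (as `∇H` is of degree `0`) and `C¹` away
from the origin. For such a map, scaling reduces the estimate to `‖η‖ = 1 ≥ ‖η'‖`. If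
`‖η - η'‖ ≥ 1/2`, the growth bound `‖a_p(ξ)‖ ≤ M ‖ξ‖^(p-1)` suffices; otherwise the segment
`[η', η]` stays in the compact annulus `1/2 ≤ ‖ξ‖ ≤ 1`, where the mean value inequality applies. -/

open Metric Set Filter Topology

lemma Real.rpow_le_two_rpow_abs_mul_rpow {q r s : ℝ} (hr : 0 < r) (hrs : r ≤ s) (hsr : s ≤ 2 * r) :
    r ^ q ≤ 2 ^ |q| * s ^ q := by
  rcases le_or_gt 0 q with hq | hq
  · calc r ^ q ≤ s ^ q := Real.rpow_le_rpow hr.le hrs hq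
      _ ≤ 2 ^ |q| * s ^ q := le_mul_of_one_le_left (Real.rpow_nonneg (by linarith) q)
        (Real.one_le_rpow one_le_two (abs_nonneg q))
  · calc r ^ q ≤ (s / 2) ^ q := Real.rpow_le_rpow_of_nonpos (by linarith) (by linarith) hq.le
      _ = 2 ^ |q| * s ^ q := by
        rw [Real.div_rpow (by linarith) zero_le_two, abs_of_neg hq, Real.rpow_neg zero_le_two]
        ring

lemma segment_subset_closedBall_diff_ball {E : Type*} [NormedAddCommGroup E] [NormedSpace ℝ E]
    {x y : E} (hx : ‖x‖ = 1) (hy : ‖y‖ ≤ 1) (hxy : ‖x - y‖ < 1 / 2) :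
    segment ℝ y x ⊆ closedBall 0 1 \ ball 0 (1 / 2) := by
  intro z hz
  have hz₁ : z ∈ closedBall (0 : E) 1 :=
    (convex_closedBall 0 1).segment_subset (by simpa using hy) (by simp [hx]) hz
  have hz₂ : z ∈ closedBall x ‖x - y‖ :=
    (convex_closedBall x _).segment_subset (by simp [dist_eq_norm, norm_sub_rev])
      (mem_closedBall_self (norm_nonneg _)) hz
  rw [mem_closedBall, dist_eq_norm] at hz₂
  have hxz : ‖x‖ - ‖z‖ ≤ ‖z - x‖ := by simpa only [norm_sub_rev z x] using norm_sub_norm_le x z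
  refine ⟨hz₁, ?_⟩
  simp only [mem_ball, dist_zero_right, not_lt]
  linarith

lemma fderiv_smul_eq_rpow_smul {E F : Type*} [NormedAddCommGroup E] [NormedSpace ℝ E]
    [NormedAddCommGroup F] [NormedSpace ℝ F] {f : E → F} {α t : ℝ} {x : E} (ht : 0 < t)
    (hf : (fun y => f (t • y)) =ᶠ[𝓝 x] fun y => t ^ α • f y) :
    fderiv ℝ f (t • x) = t ^ (α - 1) • fderiv ℝ f x := by
  have h : t • fderiv ℝ f (t • x) = t ^ α • fderiv ℝ f x := by
    rw [← fderiv_comp_smul, hf.fderiv_eq]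
    exact congrFun (fderiv_const_smul_field (t ^ α)) x
  rw [Real.rpow_sub_one ht.ne', div_eq_inv_mul, mul_smul, ← h, inv_smul_smul₀ ht.ne']

def PosHomogeneous {E F : Type*} [AddCommGroup E] [Module ℝ E] [AddCommGroup F] [Module ℝ F]
    (α : ℝ) (f : E → F) : Prop :=
  ∀ x (t : ℝ), 0 < t → f (t • x) = t ^ α • f x

namespace PosHomogeneous

variable {E F : Type*} [NormedAddCommGroup E] [NormedSpace ℝ E] [NormedAddCommGroup F]
  [NormedSpace ℝ F] {f : E → F} {α : ℝ}

lemma map_zero (hf : PosHomogeneous α f) (hα : 0 < α) : f 0 = 0 := by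
  have h : f 0 = (2 : ℝ) ^ α • f 0 := by simpa using hf 0 2 two_pos
  have h2 : (1 : ℝ) < 2 ^ α := Real.one_lt_rpow one_lt_two hα
  have : ((2 : ℝ) ^ α - 1) • f 0 = 0 := by rw [sub_smul, ← h, one_smul, sub_self]
  exact (smul_eq_zero.mp this).resolve_left (by linarith)

lemma exists_norm_le [ProperSpace E] (hf : PosHomogeneous α f) (hα : 0 < α)
    (hcont : ContinuousOn f (sphere 0 1)) : ∃ M, 0 < M ∧ ∀ x, ‖f x‖ ≤ M * ‖x‖ ^ α := by
  obtain ⟨M, hM⟩ := (isCompact_sphere (0 : E) 1).exists_bound_of_continuousOn hcont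
  refine ⟨max M 1, by positivity, fun x => ?_⟩
  rcases eq_or_ne x 0 with rfl | hx
  · simp [hf.map_zero hα, Real.zero_rpow hα.ne']
  have hxn : 0 < ‖x‖ := norm_pos_iff.mpr hx
  have hu : ‖x‖⁻¹ • x ∈ sphere (0 : E) 1 := by
    simp [norm_smul, inv_mul_cancel₀ hxn.ne']
  have hfx : f x = ‖x‖ ^ α • f (‖x‖⁻¹ • x) := by
    rw [← hf _ _ hxn, smul_inv_smul₀ hxn.ne']
  rw [hfx, norm_smul, Real.norm_of_nonneg (by positivity), mul_comm]
  gcongr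
  exact (hM _ hu).trans (le_max_left _ _)

lemma exists_norm_sub_le_of_norm_eq_one [ProperSpace E] (hf : PosHomogeneous α f) (hα : 0 < α)
    (hC1 : ContDiffOn ℝ 1 f {0}ᶜ) :
    ∃ L, 0 < L ∧ ∀ x y : E, ‖x‖ = 1 → ‖y‖ ≤ 1 → ‖f x - f y‖ ≤ L * ‖x - y‖ := by
  have hA : closedBall (0 : E) 1 \ ball 0 (1 / 2) ⊆ {0}ᶜ := by
    rintro z ⟨-, hz⟩ rfl
    norm_num at hz
  have hsphere : sphere (0 : E) 1 ⊆ {0}ᶜ := by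
    rintro z hz rfl
    norm_num at hz
  obtain ⟨M, hM, hfM⟩ := hf.exists_norm_le hα (hC1.continuousOn.mono hsphere)
  obtain ⟨K, hK⟩ := ((isCompact_closedBall 0 1).diff isOpen_ball).exists_bound_of_continuousOn
    ((hC1.continuousOn_fderiv_of_isOpen isOpen_compl_singleton le_rfl).mono hA)
  refine ⟨max (4 * M) K, by positivity, fun x y hx hy => ?_⟩
  rcases le_or_gt (1 / 2) ‖x - y‖ with hfar | hnear
  · have hfy : ‖f y‖ ≤ M := by
      calc ‖f y‖ ≤ M * ‖y‖ ^ α := hfM y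
        _ ≤ M * 1 := by gcongr; exact Real.rpow_le_one (norm_nonneg _) hy hα.le
        _ = M := mul_one M
    calc ‖f x - f y‖ ≤ ‖f x‖ + ‖f y‖ := norm_sub_le _ _
      _ ≤ M + M := by gcongr; simpa [hx] using hfM x
      _ ≤ 4 * M * ‖x - y‖ := by nlinarith
      _ ≤ max (4 * M) K * ‖x - y‖ := by gcongr; exact le_max_left _ _
  · have hseg := segment_subset_closedBall_diff_ball hx hy hnear
    calc ‖f x - f y‖ ≤ K * ‖x - y‖ :=
          (convex_segment y x).norm_image_sub_le_of_norm_fderiv_le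
            (fun z hz => (hC1.differentiableOn one_ne_zero z (hA (hseg hz))).differentiableAt
              (isOpen_compl_singleton.mem_nhds (hA (hseg hz))))
            (fun z hz => hK z (hseg hz)) (left_mem_segment ℝ y x) (right_mem_segment ℝ y x)
      _ ≤ max (4 * M) K * ‖x - y‖ := by gcongr; exact le_max_right _ _

lemma norm_sub_le_of_norm_le (hf : PosHomogeneous α f) {L : ℝ}
    (hL : ∀ x y : E, ‖x‖ = 1 → ‖y‖ ≤ 1 → ‖f x - f y‖ ≤ L * ‖x - y‖)
    {x y : E} (hx : x ≠ 0) (hyx : ‖y‖ ≤ ‖x‖) :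
    ‖f x - f y‖ ≤ L * ‖x‖ ^ (α - 1) * ‖x - y‖ := by
  set r := ‖x‖
  have hr : 0 < r := norm_pos_iff.mpr hx
  have hscale : ∀ z : E, f z = r ^ α • f (r⁻¹ • z) := fun z => by
    rw [← hf _ _ hr, smul_inv_smul₀ hr.ne']
  have hu : ‖r⁻¹ • x‖ = 1 := by simp [r, norm_smul, inv_mul_cancel₀ hr.ne']
  have hv : ‖r⁻¹ • y‖ ≤ 1 := by
    rw [norm_smul, norm_inv, norm_norm, inv_mul_le_one₀ hr]
    exact hyx
  calc ‖f x - f y‖ = r ^ α * ‖f (r⁻¹ • x) - f (r⁻¹ • y)‖ := by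
        rw [hscale x, hscale y, ← smul_sub, norm_smul, Real.norm_of_nonneg (by positivity)]
    _ ≤ r ^ α * (L * ‖r⁻¹ • x - r⁻¹ • y‖) := by gcongr; exact hL _ _ hu hv
    _ = L * r ^ (α - 1) * ‖x - y‖ := by
        rw [← smul_sub, norm_smul, norm_inv, norm_norm, Real.rpow_sub_one hr.ne']
        ring

theorem exists_norm_sub_le [ProperSpace E] (hf : PosHomogeneous α f) (hα : 0 < α)
    (hC1 : ContDiffOn ℝ 1 f {0}ᶜ) :
    ∃ C, 0 < C ∧ ∀ x y : E, 0 < ‖x‖ + ‖y‖ →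
      ‖f x - f y‖ ≤ C * (‖x‖ + ‖y‖) ^ (α - 1) * ‖x - y‖ := by
  obtain ⟨L, hL, hLip⟩ := hf.exists_norm_sub_le_of_norm_eq_one hα hC1
  have key : ∀ x y : E, ‖y‖ ≤ ‖x‖ → 0 < ‖x‖ + ‖y‖ →
      ‖f x - f y‖ ≤ 2 ^ |α - 1| * L * (‖x‖ + ‖y‖) ^ (α - 1) * ‖x - y‖ := by
    intro x y hyx hpos
    have hx : 0 < ‖x‖ := by linarith
    calc ‖f x - f y‖ ≤ L * ‖x‖ ^ (α - 1) * ‖x - y‖ :=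
          hf.norm_sub_le_of_norm_le hLip (norm_pos_iff.mp hx) hyx
      _ ≤ L * (2 ^ |α - 1| * (‖x‖ + ‖y‖) ^ (α - 1)) * ‖x - y‖ := by
          gcongr
          exact Real.rpow_le_two_rpow_abs_mul_rpow hx (by linarith [norm_nonneg y]) (by linarith)
      _ = _ := by ring
  refine ⟨2 ^ |α - 1| * L, by positivity, fun x y hpos => ?_⟩
  rcases le_total ‖y‖ ‖x‖ with hyx | hxy
  · exact key x y hyx hpos
  · rw [norm_sub_rev, norm_sub_rev x, add_comm]
    exact key y x hxy (by linarith)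

end PosHomogeneous

lemma gradient_smul_of_homogeneous {E : Type*} [NormedAddCommGroup E] [InnerProductSpace ℝ E]
    [CompleteSpace E] {H : E → ℝ} (hHhom : ∀ ξ : E, ξ ≠ 0 → ∀ t : ℝ, 0 < t → H (t • ξ) = t * H ξ)
    {x : E} (hx : x ≠ 0) {t : ℝ} (ht : 0 < t) : gradient H (t • x) = gradient H x := by
  have hH : (fun y => H (t • y)) =ᶠ[𝓝 x] fun y => t ^ (1 : ℝ) • H y := by
    filter_upwards [isOpen_compl_singleton.mem_nhds hx] with y hy
    rw [hHhom y hy t ht, Real.rpow_one, smul_eq_mul]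
  rw [gradient, gradient, fderiv_smul_eq_rpow_smul ht hH, sub_self, Real.rpow_zero, one_smul]

section aVec

variable {N : ℕ} {H : EuclideanSpace ℝ (Fin N) → ℝ} {p : ℝ}

lemma posHomogeneous_aVec (hHpos : ∀ ξ, ξ ≠ 0 → 0 < H ξ)
    (hHhom : ∀ ξ : EuclideanSpace ℝ (Fin N), ξ ≠ 0 → ∀ t : ℝ, 0 < t → H (t • ξ) = t * H ξ) :
    PosHomogeneous (p - 1) (aVec H p) := by
  intro x t ht
  rcases eq_or_ne x 0 with rfl | hx
  · simp [aVec]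
  simp only [aVec, if_neg hx, if_neg (smul_ne_zero ht.ne' hx), hHhom x hx t ht,
    gradient_smul_of_homogeneous hHhom hx ht, Real.mul_rpow ht.le (hHpos x hx).le, mul_smul]

lemma contDiffOn_aVec (hHC2 : ContDiffOn ℝ 2 H {0}ᶜ) (hHpos : ∀ ξ, ξ ≠ 0 → 0 < H ξ) :
    ContDiffOn ℝ 1 (aVec H p) {0}ᶜ := by
  have hpow : ContDiffOn ℝ 1 (fun x => H x ^ (p - 1)) {0}ᶜ :=
    (hHC2.of_le one_le_two).rpow_const_of_ne fun x hx => (hHpos x hx).ne'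
  have hgrad : ContDiffOn ℝ 1 (gradient H) {0}ᶜ :=
    (InnerProductSpace.toDual ℝ _).symm.toContinuousLinearEquiv.contDiff.comp_contDiffOn
      (hHC2.fderiv_of_isOpen isOpen_compl_singleton le_rfl)
  exact (hpow.smul hgrad).congr fun x hx => if_neg hx

end aVec

theorem statement_6_general {N : ℕ}
    (H : EuclideanSpace ℝ (Fin N) → ℝ)
    (hHC2 : ContDiffOn ℝ 2 H {(0 : EuclideanSpace ℝ (Fin N))}ᶜ)
    (hHpos : ∀ ξ : EuclideanSpace ℝ (Fin N), ξ ≠ 0 → 0 < H ξ)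
    (hHhom : ∀ ξ : EuclideanSpace ℝ (Fin N), ξ ≠ 0 → ∀ t : ℝ, 0 < t → H (t • ξ) = t * H ξ)
    (p : ℝ) (hp : 1 < p) :
    ∃ C : ℝ, 0 < C ∧ ∀ η η' : EuclideanSpace ℝ (Fin N), 0 < ‖η‖ + ‖η'‖ →
      ‖aVec H p η - aVec H p η'‖ ≤ C * (‖η‖ + ‖η'‖) ^ (p - 2) * ‖η - η'‖ := by
  have h := (posHomogeneous_aVec (p := p) hHpos hHhom).exists_norm_sub_le (by linarith)
    (contDiffOn_aVec hHC2 hHpos)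
  rwa [show p - 1 - 1 = p - 2 by ring] at h

theorem statement_6 {N : ℕ} (hN : 2 ≤ N)
    (H : EuclideanSpace ℝ (Fin N) → ℝ)
    (hH0 : H 0 = 0)
    (hHnonneg : ∀ ξ : EuclideanSpace ℝ (Fin N), 0 ≤ H ξ)
    (hHC2 : ContDiffOn ℝ 2 H {(0 : EuclideanSpace ℝ (Fin N))}ᶜ)
    (hHeven : ∀ ξ : EuclideanSpace ℝ (Fin N), H (-ξ) = H ξ)
    (hHpos : ∀ ξ : EuclideanSpace ℝ (Fin N), ξ ≠ 0 → 0 < H ξ)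
    (hHhom : ∀ ξ : EuclideanSpace ℝ (Fin N), ξ ≠ 0 → ∀ t : ℝ, 0 < t → H (t • ξ) = t * H ξ)
    (hHell : ∃ lam : ℝ, 0 < lam ∧ ∀ ξ : EuclideanSpace ℝ (Fin N), H ξ = 1 →
      ∀ ζ : EuclideanSpace ℝ (Fin N), ⟪gradient H ξ, ζ⟫ = 0 →
        lam * ‖ζ‖ ^ 2 ≤ iteratedFDeriv ℝ 2 H ξ ![ζ, ζ])
    (p : ℝ) (hp : 1 < p) :
    ∃ C : ℝ, 0 < C ∧ ∀ η η' : EuclideanSpace ℝ (Fin N), 0 < ‖η‖ + ‖η'‖ →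
      ‖aVec H p η - aVec H p η'‖ ≤ C * (‖η‖ + ‖η'‖) ^ (p - 2) * ‖η - η'‖ :=
  statement_6_general H hHC2 hHpos hHhom p hp
end
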